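/- Let 𝔼 ∈ 𝔈 be a relevant affine subspace, M = G_𝔼 the associated pseudo-Levi, π_M: 𝔞 → 𝔞_M = 𝔞/𝔞^M the projection, and x ∈ X_*(T^ad). Then the element ȷ_x := m(π_M(x/m) − π_M(𝔼)) lies in the cocharacter lattice X_*(T/Z_M) ⊂ 𝔞_M; equivalently, ȷ_x takes integer values on all roots of M, and hence defines a ℤ-grading on 𝔪 = Lie M compatible with the ℤ/m-grading on 𝔤. -/

import Mathlib

theorem exists_int_natCast_mul_eq_of_add_div_eq {K : Type*} [Field K] [CharZero K]
    {a : K} {i k : ℤ} {e m : ℕ} (hem : e ∣ m) (h : a + i / e = k) :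
    ∃ n : ℤ, m * a = n := by
  obtain ⟨c, rfl⟩ := hem
  rcases eq_or_ne e 0 with rfl | he
  · exact ⟨0, by simp⟩
  · refine ⟨e * c * k - c * i, ?_⟩
    push_cast
    rw [← h]
    field_simp
    ring

theorem jx_lies_in_cocharacter_lattice_general
    {V : Type*} [AddCommGroup V] [Module ℚ V]
    (Φ : Set ((V →ₗ[ℚ] ℚ) × ℤ))
    (e m : ℕ) (hem : e ∣ m)
    (x : V) (hx : ∀ p ∈ Φ, ∃ k : ℤ, p.1 x = (k : ℚ))
    (E : Set V) :
    ∀ p ∈ Φ, (∀ y ∈ E, ∃ k : ℤ, p.1 y + (p.2 : ℚ) / (e : ℚ) = (k : ℚ)) →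
      ∀ y₀ ∈ E, ∃ k : ℤ, p.1 (x - (m : ℚ) • y₀) = (k : ℚ) := by
  intro p hp hroot y₀ hy₀
  obtain ⟨k, hk⟩ := hx p hp
  obtain ⟨_, hy₀_root⟩ := hroot y₀ hy₀
  obtain ⟨n, hn⟩ := exists_int_natCast_mul_eq_of_add_div_eq hem hy₀_root
  exact ⟨k - n, by rw [map_sub, map_smul, smul_eq_mul, hk, hn, Int.cast_sub]⟩

/-- Let `𝔼 ∈ 𝔈` be a relevant affine subspace of `𝔞 = X_*(T)_ℚ` (here the
subset `E` of the `ℚ`-vector space `V`), `M = G_𝔼` the associated pseudo-Levi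
with twisted root datum `R_𝔼 = {(α,i) ∈ Φ̃ : ⟨α,y⟩ + i/e ∈ ℤ ∀ y ∈ 𝔼}`, and
`x ∈ X_*(T^ad)` (so `⟨α,x⟩ ∈ ℤ` for all roots), with `e ∣ m`.  Then
`ȷ_x = m(π_M(x/m) − π_M(𝔼))` lies in the cocharacter lattice `X_*(T/Z_M)`:
equivalently, for every root `(α,i) ∈ R_𝔼` of `M` and every `y₀ ∈ 𝔼`,
`⟨α, x − m·y₀⟩ ∈ ℤ`; hence `ȷ_x` defines a `ℤ`-grading on `𝔪 = Lie M`
compatible with the `ℤ/m`-grading on `𝔤`. -/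
theorem jx_lies_in_cocharacter_lattice
    {V : Type*} [AddCommGroup V] [Module ℚ V]
    (Φ : Set ((V →ₗ[ℚ] ℚ) × ℤ))
    (e m : ℕ) (he : 0 < e) (hm : 0 < m) (hem : e ∣ m)
    (x : V) (hx : ∀ p ∈ Φ, ∃ k : ℤ, p.1 x = (k : ℚ))
    (E : Set V) (hE : E.Nonempty) :
    ∀ p ∈ Φ, (∀ y ∈ E, ∃ k : ℤ, p.1 y + (p.2 : ℚ) / (e : ℚ) = (k : ℚ)) →
      ∀ y₀ ∈ E, ∃ k : ℤ, p.1 (x - (m : ℚ) • y₀) = (k : ℚ) :=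
  jx_lies_in_cocharacter_lattice_general Φ e m hem x hx E
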